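/- arXiv:2010.08148 — 6 statements merged into one kernel-verified Lean document; each statement's English description precedes it below -/
import Mathlib

section
/- Let ν be a probability measure on ℝ^d with finite second moment (∫‖x‖₂² dν < ∞). Then the function F_ν({a_ℓ}_{ℓ∈[k]}) := (∫_{ℝ^d} d²(x, co({a_ℓ})) dν(x))^{1/2} is 1-Lipschitz from ({ℝ^d}^k, d_{2,∞}) to ℝ; i.e., |F_ν(A) − F_ν(B)| ≤ d_{2,∞}(A, B) for all pointsets A, B of k points. -/
open MeasureTheory

noncomputable def d2inf {d k : ℕ} (A B : Fin k → EuclideanSpace ℝ (Fin d)) : ℝ :=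
  ⨅ σ : Equiv.Perm (Fin k), ⨆ ℓ : Fin k, dist (A (σ ℓ)) (B ℓ)

/-- The archetypal objective `F_ν`. -/
noncomputable def archObj {d k : ℕ} (ν : Measure (EuclideanSpace ℝ (Fin d)))
    (A : Fin k → EuclideanSpace ℝ (Fin d)) : ℝ :=
  Real.sqrt (∫ x, Metric.infDist x (convexHull ℝ (Set.range A)) ^ 2 ∂ν)

/-- Pointwise bound: the infDist to `co(range A)` is at most infDist to `co(range B)` plus the
matched sup distance. -/
lemma infDist_hull_le {d k : ℕ} [NeZero k] (A B : Fin k → EuclideanSpace ℝ (Fin d))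
    (σ : Equiv.Perm (Fin k)) (x : EuclideanSpace ℝ (Fin d)) :
    Metric.infDist x (convexHull ℝ (Set.range A)) ≤
      Metric.infDist x (convexHull ℝ (Set.range B)) + ⨆ ℓ, dist (A (σ ℓ)) (B ℓ) := by
  set r : ℝ := ⨆ ℓ, dist (A (σ ℓ)) (B ℓ) with hr
  have hbdd : BddAbove (Set.range fun ℓ => dist (A (σ ℓ)) (B ℓ)) :=
    (Set.finite_range _).bddAbove
  have hdist : ∀ ℓ, dist (A (σ ℓ)) (B ℓ) ≤ r := fun ℓ => le_ciSup hbdd ℓ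
  have hr0 : 0 ≤ r := le_trans dist_nonneg (hdist (Classical.arbitrary _))
  set S := convexHull ℝ (Set.range A) with hS
  have hSconv : Convex ℝ S := convex_convexHull ℝ _
  -- co(range B) ⊆ cthickening r S
  have hsub : convexHull ℝ (Set.range B) ⊆ Metric.cthickening r S := by
    apply convexHull_min _ (hSconv.cthickening r)
    rintro y ⟨ℓ, rfl⟩
    rw [Metric.mem_cthickening_iff]
    calc EMetric.infEdist (B ℓ) S ≤ edist (B ℓ) (A (σ ℓ)) :=
          EMetric.infEdist_le_edist_of_mem (subset_convexHull ℝ _ (Set.mem_range_self _))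
      _ = ENNReal.ofReal (dist (A (σ ℓ)) (B ℓ)) := by rw [edist_dist, dist_comm]
      _ ≤ ENNReal.ofReal r := ENNReal.ofReal_le_ofReal (hdist ℓ)
  have hinf : ∀ y ∈ convexHull ℝ (Set.range B), Metric.infDist y S ≤ r := by
    intro y hy
    have := hsub hy
    rw [Metric.mem_cthickening_iff] at this
    calc Metric.infDist y S = (EMetric.infEdist y S).toReal := rfl
      _ ≤ (ENNReal.ofReal r).toReal := ENNReal.toReal_mono ENNReal.ofReal_ne_top this
      _ = r := ENNReal.toReal_ofReal hr0
  have hne : (convexHull ℝ (Set.range B)).Nonempty :=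
    ⟨B (Classical.arbitrary _), subset_convexHull ℝ _ (Set.mem_range_self _)⟩
  by_contra hcon
  push_neg at hcon
  have : Metric.infDist x (convexHull ℝ (Set.range B)) < Metric.infDist x S - r := by linarith
  obtain ⟨y, hy, hxy⟩ := (Metric.infDist_lt_iff hne).1 this
  have h1 : Metric.infDist x S ≤ Metric.infDist y S + dist x y :=
    Metric.infDist_le_infDist_add_dist
  have h2 := hinf y hy
  linarith

/-- Minkowski-type inequality for the square-root-of-integral functional. -/
lemma sqrt_integral_sq_le {α : Type*} [MeasurableSpace α] (μ : Measure α)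
    [IsProbabilityMeasure μ] {f g : α → ℝ} (hf : AEStronglyMeasurable f μ)
    (hg : AEStronglyMeasurable g μ) (hf0 : ∀ x, 0 ≤ f x) (hg0 : ∀ x, 0 ≤ g x)
    {r : ℝ} (hr : 0 ≤ r) (hfg : ∀ x, f x ≤ g x + r)
    (hf2 : Integrable (fun x => f x ^ 2) μ) (hg2 : Integrable (fun x => g x ^ 2) μ) :
    Real.sqrt (∫ x, f x ^ 2 ∂μ) ≤ Real.sqrt (∫ x, g x ^ 2 ∂μ) + r := by
  have hgL2 : MemLp g 2 μ := (memLp_two_iff_integrable_sq hg).2 hg2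
  have hg1 : Integrable g μ := hgL2.integrable one_le_two
  have hIg2_nonneg : 0 ≤ ∫ x, g x ^ 2 ∂μ := integral_nonneg fun x => sq_nonneg _
  have hIg_nonneg : 0 ≤ ∫ x, g x ∂μ := integral_nonneg hg0
  -- Cauchy-Schwarz via variance
  have hCS : ∫ x, g x ∂μ ≤ Real.sqrt (∫ x, g x ^ 2 ∂μ) := by
    rw [Real.le_sqrt hIg_nonneg hIg2_nonneg]
    have hvar := ProbabilityTheory.variance_nonneg g μ
    have hdef := ProbabilityTheory.variance_eq_sub (μ := μ) hgL2
    have hdef' : ProbabilityTheory.variance g μ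
        = (∫ x, g x ^ 2 ∂μ) - (∫ x, g x ∂μ) ^ 2 := by
      simpa [Pi.pow_apply] using hdef
    linarith
  -- expand the square
  have hexp : ∫ x, (g x + r) ^ 2 ∂μ
      = ∫ x, g x ^ 2 ∂μ + (2 * r) * ∫ x, g x ∂μ + r ^ 2 := by
    have h1 : ∀ x, (g x + r) ^ 2 = g x ^ 2 + ((2 * r) * g x + r ^ 2) := by intro x; ring
    have hint2 : Integrable (fun x => (2 * r) * g x + r ^ 2) μ := by
      exact (hg1.const_mul (2 * r)).add (integrable_const _)
    simp only [h1]
    rw [integral_add hg2 hint2,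
      integral_add (hg1.const_mul (2 * r)) (integrable_const _), integral_const_mul,
      integral_const]
    simp only [measure_univ, probReal_univ, ENNReal.toReal_one, smul_eq_mul, one_mul, mul_one]
    ring
  have hmono : ∫ x, f x ^ 2 ∂μ ≤ ∫ x, (g x + r) ^ 2 ∂μ := by
    apply integral_mono hf2
    · have : (fun x => (g x + r) ^ 2) = fun x => g x ^ 2 + ((2 * r) * g x + r ^ 2) := by
        funext x; ring
      rw [this]
      exact hg2.add (((hg1.const_mul (2 * r))).add (integrable_const _))
    · intro x
      show f x ^ 2 ≤ (g x + r) ^ 2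
      nlinarith [hfg x, hf0 x, hg0 x]
  have hkey : ∫ x, f x ^ 2 ∂μ ≤ (Real.sqrt (∫ x, g x ^ 2 ∂μ) + r) ^ 2 := by
    have hsq : Real.sqrt (∫ x, g x ^ 2 ∂μ) ^ 2 = ∫ x, g x ^ 2 ∂μ := Real.sq_sqrt hIg2_nonneg
    calc ∫ x, f x ^ 2 ∂μ ≤ ∫ x, (g x + r) ^ 2 ∂μ := hmono
      _ = ∫ x, g x ^ 2 ∂μ + (2 * r) * ∫ x, g x ∂μ + r ^ 2 := hexp
      _ ≤ (Real.sqrt (∫ x, g x ^ 2 ∂μ) + r) ^ 2 := by nlinarith [Real.sqrt_nonneg (∫ x, g x ^ 2 ∂μ)]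
  calc Real.sqrt (∫ x, f x ^ 2 ∂μ) ≤ Real.sqrt ((Real.sqrt (∫ x, g x ^ 2 ∂μ) + r) ^ 2) :=
        Real.sqrt_le_sqrt hkey
    _ = Real.sqrt (∫ x, g x ^ 2 ∂μ) + r := Real.sqrt_sq (by positivity)

lemma integrable_infDist_sq {d k : ℕ} [NeZero k] (ν : Measure (EuclideanSpace ℝ (Fin d)))
    [IsProbabilityMeasure ν] (hν : Integrable (fun x => ‖x‖ ^ 2) ν)
    (A : Fin k → EuclideanSpace ℝ (Fin d)) :
    Integrable (fun x => Metric.infDist x (convexHull ℝ (Set.range A)) ^ 2) ν := by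
  set c : ℝ := ‖A (Classical.arbitrary _)‖ with hc
  have hc0 : 0 ≤ c := norm_nonneg _
  have hnorm : Integrable (fun x : EuclideanSpace ℝ (Fin d) => ‖x‖) ν := by
    refine ((integrable_const (1 : ℝ)).add hν).mono' continuous_norm.aestronglyMeasurable ?_
    filter_upwards with x
    rw [Real.norm_of_nonneg (norm_nonneg x)]
    show ‖x‖ ≤ 1 + ‖x‖ ^ 2
    nlinarith [norm_nonneg x]
  have hbig : Integrable (fun x : EuclideanSpace ℝ (Fin d) => (‖x‖ + c) ^ 2) ν := by
    have : (fun x : EuclideanSpace ℝ (Fin d) => (‖x‖ + c) ^ 2)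
        = fun x => ‖x‖ ^ 2 + ((2 * c) * ‖x‖ + c ^ 2) := by funext x; ring
    rw [this]
    exact hν.add ((hnorm.const_mul _).add (integrable_const _))
  refine hbig.mono' ?_ ?_
  · exact ((Metric.continuous_infDist_pt _).pow 2).aestronglyMeasurable
  · filter_upwards with x
    have h1 : Metric.infDist x (convexHull ℝ (Set.range A)) ≤ ‖x‖ + c := by
      calc Metric.infDist x (convexHull ℝ (Set.range A))
          ≤ dist x (A (Classical.arbitrary _)) :=
            Metric.infDist_le_dist_of_mem
              (subset_convexHull ℝ _ (Set.mem_range_self _))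
        _ ≤ ‖x‖ + c := by rw [dist_eq_norm]; exact (norm_sub_le _ _)
    have h0 : 0 ≤ Metric.infDist x (convexHull ℝ (Set.range A)) := Metric.infDist_nonneg
    rw [Real.norm_of_nonneg (sq_nonneg _)]
    nlinarith

lemma archObj_le {d k : ℕ} [NeZero k] (ν : Measure (EuclideanSpace ℝ (Fin d)))
    [IsProbabilityMeasure ν] (hν : Integrable (fun x => ‖x‖ ^ 2) ν)
    (A B : Fin k → EuclideanSpace ℝ (Fin d)) (σ : Equiv.Perm (Fin k)) :
    archObj ν A ≤ archObj ν B + ⨆ ℓ, dist (A (σ ℓ)) (B ℓ) := by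
  have hbdd : BddAbove (Set.range fun ℓ => dist (A (σ ℓ)) (B ℓ)) :=
    (Set.finite_range _).bddAbove
  have hr0 : 0 ≤ ⨆ ℓ, dist (A (σ ℓ)) (B ℓ) :=
    le_trans dist_nonneg (le_ciSup hbdd (Classical.arbitrary _))
  exact sqrt_integral_sq_le ν
    (Metric.continuous_infDist_pt _).aestronglyMeasurable
    (Metric.continuous_infDist_pt _).aestronglyMeasurable
    (fun x => Metric.infDist_nonneg) (fun x => Metric.infDist_nonneg)
    hr0 (infDist_hull_le A B σ)
    (integrable_infDist_sq ν hν A) (integrable_infDist_sq ν hν B)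

theorem archObj_lipschitz {d k : ℕ} (ν : Measure (EuclideanSpace ℝ (Fin d)))
    [IsProbabilityMeasure ν] (hν : Integrable (fun x => ‖x‖ ^ 2) ν)
    (A B : Fin k → EuclideanSpace ℝ (Fin d)) :
    |archObj ν A - archObj ν B| ≤ d2inf A B := by
  rcases Nat.eq_zero_or_pos k with hk | hk
  · subst hk
    have hA : archObj ν A = 0 := by
      simp [archObj, Set.range_eq_empty]
    have hB : archObj ν B = 0 := by
      simp [archObj, Set.range_eq_empty]
    rw [hA, hB, sub_zero, abs_zero, d2inf]
    have : ∀ σ : Equiv.Perm (Fin 0), (⨆ ℓ : Fin 0, dist (A (σ ℓ)) (B ℓ)) = 0 := fun σ =>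
      Real.iSup_of_isEmpty _
    simp only [this, ciInf_const]
    exact le_rfl
  · haveI : NeZero k := ⟨hk.ne'⟩
    rw [d2inf]
    apply le_ciInf
    intro σ
    rw [abs_sub_le_iff]
    constructor
    · have := archObj_le ν hν A B σ
      linarith
    · have h := archObj_le ν hν B A σ⁻¹
      have heq : (⨆ ℓ, dist (B (σ⁻¹ ℓ)) (A ℓ)) = ⨆ ℓ, dist (A (σ ℓ)) (B ℓ) := by
        have hcomp : (⨆ ℓ, dist (B (σ⁻¹ (σ ℓ))) (A (σ ℓ)))
            = ⨆ ℓ, dist (B (σ⁻¹ ℓ)) (A ℓ) := by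
          simp only [iSup]
          congr 1
          exact Function.Surjective.range_comp σ.surjective
            (fun ℓ => dist (B (σ⁻¹ ℓ)) (A ℓ))
        rw [← hcomp]
        simp [dist_comm]
      rw [heq] at h
      linarith
end

section
/- Let ν be a square-integrable probability measure on ℝ^d with mean x̄, let α > 0, and let A_{⋆,α} be a minimizer of the variance-regularized archetypal problem F_{ν,α}. Then diam(A_{⋆,α}) ≤ 4 k^{1/2} α^{-1/2} (∫ ‖x − x̄‖₂² dν)^{1/2}. -/
open MeasureTheory

/-- The support of a measure: points all of whose neighborhoods have positive measure. -/
def msupport {E : Type*} [TopologicalSpace E] [MeasurableSpace E] (ν : Measure E) : Set E :=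
  {x | ∀ U ∈ nhds x, 0 < ν U}

/-- The variance-regularized archetypal objective `F_{ν,α}`. -/
noncomputable def regObj {d k : ℕ} (ν : Measure (EuclideanSpace ℝ (Fin d))) (α : ℝ)
    (A : Fin k → EuclideanSpace ℝ (Fin d)) : ℝ :=
  Real.sqrt ((∫ x, Metric.infDist x (convexHull ℝ (Set.range A)) ^ 2 ∂ν) +
    α / k * ∑ ℓ, ‖A ℓ - (k : ℝ)⁻¹ • ∑ j, A j‖ ^ 2)

/-- a.e. every point is in the measure support (second countable spaces). -/
lemma ae_mem_msupport {E : Type*} [TopologicalSpace E] [SecondCountableTopology E]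
    [MeasurableSpace E] (ν : Measure E) : ∀ᵐ x ∂ν, x ∈ msupport ν := by
  set S : Set (Set E) := {U | IsOpen U ∧ ν U = 0} with hS
  obtain ⟨T, hTc, hTS, hTU⟩ := TopologicalSpace.isOpen_sUnion_countable S (fun U hU => hU.1)
  have hTnull : ν (⋃₀ T) = 0 := (measure_sUnion_null_iff hTc).2 fun s hs => (hTS hs).2
  rw [hTU] at hTnull
  rw [ae_iff]
  refine measure_mono_null ?_ hTnull
  intro x hx
  simp only [msupport, Set.mem_setOf_eq, not_forall, not_lt, nonpos_iff_eq_zero] at hx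
  obtain ⟨U, hU, hUν⟩ := hx
  refine Set.mem_sUnion.2 ⟨interior U, ⟨isOpen_interior, ?_⟩, mem_interior_iff_mem_nhds.2 hU⟩
  exact measure_mono_null interior_subset hUν

theorem diam_minimizer_le {d k : ℕ} (hk : 0 < k)
    (ν : Measure (EuclideanSpace ℝ (Fin d))) [IsProbabilityMeasure ν]
    (hν : Integrable (fun x => ‖x‖ ^ 2) ν) (α : ℝ) (hα : 0 < α)
    (A : Fin k → EuclideanSpace ℝ (Fin d))
    (hA : ∀ ℓ, A ℓ ∈ convexHull ℝ (msupport ν))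
    (hmin : ∀ B : Fin k → EuclideanSpace ℝ (Fin d),
      (∀ ℓ, B ℓ ∈ convexHull ℝ (msupport ν)) → regObj ν α A ≤ regObj ν α B) :
    Metric.diam (Set.range A) ≤
      4 * Real.sqrt k * α ^ (-(1/2 : ℝ)) * Real.sqrt (∫ x, ‖x - ∫ y, y ∂ν‖ ^ 2 ∂ν) := by
  classical
  haveI : Nonempty (Fin k) := ⟨⟨0, hk⟩⟩
  have hkR : (0:ℝ) < (k:ℝ) := by exact_mod_cast hk
  set xb : EuclideanSpace ℝ (Fin d) := ∫ y, y ∂ν with hxb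
  -- integrability of the identity
  have hid : Integrable (fun x : EuclideanSpace ℝ (Fin d) => x) ν := by
    refine Integrable.mono' ((integrable_const (1 : ℝ)).add hν)
      aestronglyMeasurable_id ?_
    filter_upwards with x
    simp only [Pi.add_apply]
    have h0 : (0:ℝ) ≤ ‖x‖ := norm_nonneg x
    nlinarith [sq_nonneg (‖x‖ - 1)]
  -- the mean lies in the closure of the convex hull of the support
  have hxb_mem : xb ∈ closure (convexHull ℝ (msupport ν)) := by
    refine Convex.integral_mem (convex_convexHull ℝ _).closure isClosed_closure ?_ hid
    filter_upwards [ae_mem_msupport ν] with x hx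
    exact subset_closure (subset_convexHull ℝ _ hx)
  -- expansion of the second moment around an arbitrary point
  have hinner_int : ∀ c : EuclideanSpace ℝ (Fin d), Integrable (fun x : EuclideanSpace ℝ (Fin d) => (inner ℝ c x : ℝ)) ν := fun c =>
    (innerSL ℝ c).integrable_comp hid
  have hexp : ∀ c : EuclideanSpace ℝ (Fin d),
      (∫ x, ‖x - c‖ ^ 2 ∂ν) = (∫ x, ‖x‖ ^ 2 ∂ν) - 2 * (inner ℝ c xb : ℝ) + ‖c‖ ^ 2 := by
    intro c
    have h1 : (fun x : EuclideanSpace ℝ (Fin d) => ‖x - c‖ ^ 2)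
        = fun x : EuclideanSpace ℝ (Fin d) => ‖x‖ ^ 2 - 2 * (inner ℝ c x : ℝ) + ‖c‖ ^ 2 := by
      funext x
      rw [norm_sub_sq_real, real_inner_comm]
    have h2 : (∫ x, (inner ℝ c x : ℝ) ∂ν) = (inner ℝ c xb : ℝ) :=
      (innerSL ℝ c).integral_comp_comm hid
    have hint2 : Integrable (fun x : EuclideanSpace ℝ (Fin d) => 2 * (inner ℝ c x : ℝ)) ν := (hinner_int c).const_mul 2
    have hint1 : Integrable (fun x : EuclideanSpace ℝ (Fin d) => ‖x‖ ^ 2 - 2 * (inner ℝ c x : ℝ)) ν := hν.sub hint2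
    rw [h1, integral_add hint1 (integrable_const _),
      integral_sub hν hint2, integral_const_mul 2 _, h2, integral_const]
    simp [measure_univ]
  -- main quantities
  set T : ℝ := ∫ x, Metric.infDist x (convexHull ℝ (Set.range A)) ^ 2 ∂ν with hT
  set S : ℝ := ∑ ℓ, ‖A ℓ - (k : ℝ)⁻¹ • ∑ j, A j‖ ^ 2 with hSdef
  have hT0 : 0 ≤ T := integral_nonneg fun x => pow_nonneg Metric.infDist_nonneg 2
  have hS0 : 0 ≤ S := Finset.sum_nonneg fun ℓ _ => pow_nonneg (norm_nonneg _) 2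
  -- comparison with constant configurations
  have hkey : ∀ c ∈ convexHull ℝ (msupport ν), T + α / k * S ≤ ∫ x, ‖x - c‖ ^ 2 ∂ν := by
    intro c hc
    have hB := hmin (fun _ : Fin k => c) (fun _ => hc)
    have hrange : Set.range (fun _ : Fin k => c) = {c} := Set.range_const
    have hsum : (∑ _j : Fin k, c) = (k : ℕ) • c := by
      simp [Finset.sum_const]
    have hvec : c - (k : ℝ)⁻¹ • (∑ _j : Fin k, c) = 0 := by
      rw [hsum, ← Nat.cast_smul_eq_nsmul ℝ, smul_smul, inv_mul_cancel₀ (ne_of_gt hkR), one_smul,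
        sub_self]
    have hobj : regObj ν α (fun _ : Fin k => c) = Real.sqrt (∫ x, ‖x - c‖ ^ 2 ∂ν) := by
      unfold regObj
      rw [hrange]
      simp only [convexHull_singleton, Metric.infDist_singleton, dist_eq_norm, hvec]
      simp
    rw [hobj] at hB
    have h2 : regObj ν α A = Real.sqrt (T + α / k * S) := rfl
    rw [h2] at hB
    have hI0 : 0 ≤ ∫ x, ‖x - c‖ ^ 2 ∂ν := integral_nonneg fun x => pow_nonneg (norm_nonneg _) 2
    exact (Real.sqrt_le_sqrt_iff hI0).1 hB
  -- pass to the closure via continuity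
  set Var : ℝ := ∫ x, ‖x - xb‖ ^ 2 ∂ν with hVar
  have hVar0 : 0 ≤ Var := integral_nonneg fun x => pow_nonneg (norm_nonneg _) 2
  have hmain : T + α / k * S ≤ Var := by
    have hφcont : Continuous fun c : EuclideanSpace ℝ (Fin d) => (∫ x, ‖x‖ ^ 2 ∂ν) - 2 * (inner ℝ c xb : ℝ) + ‖c‖ ^ 2 := by
      exact (continuous_const.sub (continuous_const.mul
        (continuous_id.inner continuous_const))).add ((continuous_norm).pow 2)
    have hclosed : IsClosed {c : EuclideanSpace ℝ (Fin d) |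
        T + α / k * S ≤ (∫ x, ‖x‖ ^ 2 ∂ν) - 2 * (inner ℝ c xb : ℝ) + ‖c‖ ^ 2} :=
      isClosed_le continuous_const hφcont
    have hsub : convexHull ℝ (msupport ν) ⊆ {c : EuclideanSpace ℝ (Fin d) |
        T + α / k * S ≤ (∫ x, ‖x‖ ^ 2 ∂ν) - 2 * (inner ℝ c xb : ℝ) + ‖c‖ ^ 2} := by
      intro c hc
      have := hkey c hc
      rwa [hexp c] at this
    have := closure_minimal hsub hclosed hxb_mem
    rw [Set.mem_setOf_eq, ← hexp xb] at this
    exact this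
  -- so α/k * S ≤ Var
  have hSle : α / k * S ≤ Var := le_trans (by linarith) hmain
  have hSbound : S ≤ k * Var / α := by
    have h := mul_le_mul_of_nonneg_right hSle (le_of_lt (by positivity : (0:ℝ) < k / α))
    calc S = α / k * S * (k / α) := by field_simp
    _ ≤ Var * (k / α) := h
    _ = k * Var / α := by ring
  -- bound on the diameter
  set m : EuclideanSpace ℝ (Fin d) := (k : ℝ)⁻¹ • ∑ j, A j with hm
  have hdist : ∀ ℓ, ‖A ℓ - m‖ ≤ Real.sqrt S := by
    intro ℓ
    rw [show Real.sqrt S = Real.sqrt S from rfl]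
    refine (Real.le_sqrt (norm_nonneg _) hS0).2 ?_
    exact Finset.single_le_sum (f := fun j => ‖A j - m‖ ^ 2)
      (fun j _ => pow_nonneg (norm_nonneg _) 2) (Finset.mem_univ ℓ)
  have hdiam : Metric.diam (Set.range A) ≤ 2 * Real.sqrt S := by
    refine Metric.diam_le_of_forall_dist_le (by positivity) ?_
    rintro x ⟨i, rfl⟩ y ⟨j, rfl⟩
    calc dist (A i) (A j) = ‖(A i - m) - (A j - m)‖ := by rw [dist_eq_norm, sub_sub_sub_cancel_right]
    _ ≤ ‖A i - m‖ + ‖A j - m‖ := norm_sub_le _ _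
    _ ≤ Real.sqrt S + Real.sqrt S := add_le_add (hdist i) (hdist j)
    _ = 2 * Real.sqrt S := by ring
  -- conclude
  have hrpow : α ^ (-(1/2 : ℝ)) = (Real.sqrt α)⁻¹ := by
    rw [Real.rpow_neg hα.le, Real.sqrt_eq_rpow]
  have hsqrtS : Real.sqrt S ≤ Real.sqrt k * Real.sqrt Var * (Real.sqrt α)⁻¹ := by
    calc Real.sqrt S ≤ Real.sqrt (k * Var / α) := Real.sqrt_le_sqrt hSbound
    _ = Real.sqrt k * Real.sqrt Var * (Real.sqrt α)⁻¹ := by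
        rw [div_eq_mul_inv, Real.sqrt_mul (by positivity), Real.sqrt_mul hkR.le, Real.sqrt_inv]
  calc Metric.diam (Set.range A) ≤ 2 * Real.sqrt S := hdiam
  _ ≤ 2 * (Real.sqrt k * Real.sqrt Var * (Real.sqrt α)⁻¹) := by
      apply mul_le_mul_of_nonneg_left hsqrtS (by norm_num)
  _ ≤ 4 * Real.sqrt k * (Real.sqrt α)⁻¹ * Real.sqrt Var := by
      have : (0:ℝ) ≤ Real.sqrt k * Real.sqrt Var * (Real.sqrt α)⁻¹ := by positivity
      nlinarith
  _ = 4 * Real.sqrt k * α ^ (-(1/2 : ℝ)) * Real.sqrt Var := by rw [hrpow]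
end

section
/- Let ν be a square-integrable probability measure on ℝ^d with mean x̄, and let A_{⋆,α} be a minimizer of the variance-regularized archetypal problem with parameter α. Then for all sufficiently large α, d_{2,∞}(A_{⋆,α}, {x̄}^k) ≤ 8 k^{1/2} α^{-1/4} (∫ ‖x − x̄‖₂² dν)^{1/2}, where {x̄}^k is the pointset of k copies of x̄. -/
open MeasureTheory

section Aux
variable {d : ℕ}
local notation "E" => EuclideanSpace ℝ (Fin d)

lemma msupport_compl_null (ν : Measure E) : ν (msupport ν)ᶜ = 0 := by
  apply measure_null_of_locally_null
  intro x hx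
  simp only [msupport, Set.mem_compl_iff, Set.mem_setOf_eq, not_forall] at hx
  obtain ⟨U, hU, h0⟩ := hx
  exact ⟨U, nhdsWithin_le_nhds hU, by simpa [le_zero_iff] using h0⟩

lemma integrable_id' (ν : Measure E) [IsProbabilityMeasure ν]
    (hν : Integrable (fun x => ‖x‖ ^ 2) ν) :
    Integrable (fun x : E => x) ν := by
  refine ((integrable_const (1:ℝ)).add hν).mono' (measurable_id.aestronglyMeasurable) ?_
  filter_upwards with x
  have h : ‖x‖ ≤ 1 + ‖x‖ ^ 2 := by nlinarith [norm_nonneg x]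
  simpa [abs_of_nonneg (by positivity : (0:ℝ) ≤ 1 + ‖x‖^2)] using h

lemma mean_mem_closure (ν : Measure E) [IsProbabilityMeasure ν]
    (hν : Integrable (fun x => ‖x‖ ^ 2) ν) :
    (∫ y, y ∂ν) ∈ closure (convexHull ℝ (msupport ν)) := by
  by_contra hmem
  obtain ⟨f, u, hfu, hux⟩ := geometric_hahn_banach_closed_point
    ((convex_convexHull ℝ _).closure) isClosed_closure hmem
  have hint : Integrable (fun x : E => x) ν := integrable_id' ν hν
  have hae : ∀ᵐ x ∂ν, x ∈ msupport ν := mem_ae_iff.mpr (msupport_compl_null ν)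
  have h1 : ∫ x, f x ∂ν ≤ u := by
    have : ∫ x, f x ∂ν ≤ ∫ _, u ∂ν := by
      refine integral_mono_ae (f.integrable_comp hint) (integrable_const u) ?_
      filter_upwards [hae] with x hx
      exact le_of_lt (hfu x (subset_closure (subset_convexHull ℝ _ hx)))
    simpa using this
  have h2 : f (∫ y, y ∂ν) = ∫ x, f x ∂ν := (f.integral_comp_comm hint).symm
  rw [h2] at hux
  linarith

lemma integrable_sq_dist (ν : Measure E) [IsProbabilityMeasure ν]
    (hν : Integrable (fun x => ‖x‖ ^ 2) ν) (c : E) :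
    Integrable (fun x : E => ‖x - c‖ ^ 2) ν := by
  refine ((hν.const_mul 2).add (integrable_const (2 * ‖c‖ ^ 2))).mono'
    (((continuous_id.sub continuous_const).norm.pow 2).aestronglyMeasurable) ?_
  filter_upwards with x
  have h1 := norm_sub_le x c
  have h : ‖x - c‖ ^ 2 ≤ 2 * ‖x‖ ^ 2 + 2 * ‖c‖ ^ 2 := by
    nlinarith [norm_nonneg x, norm_nonneg c, norm_nonneg (x - c), sq_nonneg (‖x‖ - ‖c‖),
      mul_self_le_mul_self (norm_nonneg (x - c)) h1]
  simpa [abs_of_nonneg (by positivity : (0:ℝ) ≤ ‖x - c‖ ^ 2)] using h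

lemma bias_var (ν : Measure E) [IsProbabilityMeasure ν]
    (hν : Integrable (fun x => ‖x‖ ^ 2) ν) (c : E) :
    ∫ x, ‖x - c‖ ^ 2 ∂ν = (∫ x, ‖x - ∫ y, y ∂ν‖ ^ 2 ∂ν) + ‖c - ∫ y, y ∂ν‖ ^ 2 := by
  set m := ∫ y, y ∂ν with hm
  have hint : Integrable (fun x : E => x) ν := integrable_id' ν hν
  have hintm : Integrable (fun x : E => x - m) ν := hint.sub (integrable_const m)
  have hzero : ∫ x, (x - m) ∂ν = 0 := by
    rw [integral_sub hint (integrable_const m), integral_const]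
    simp [hm]
  have hinner : Integrable (fun x : E => (2:ℝ) * (inner ℝ (m - c) (x - m) : ℝ)) ν := by
    exact (((innerSL ℝ (m - c)).integrable_comp hintm)).const_mul 2
  have hptwise : ∀ x : E, ‖x - c‖ ^ 2
      = ‖x - m‖ ^ 2 + ((2:ℝ) * (inner ℝ (m - c) (x - m) : ℝ) + ‖m - c‖ ^ 2) := by
    intro x
    have : x - c = (x - m) + (m - c) := by abel
    rw [this, norm_add_sq_real]
    rw [real_inner_comm]
    ring
  have hIc := integrable_sq_dist ν hν c
  have hg : Integrable (fun x : E => (2:ℝ) * (inner ℝ (m - c) (x - m) : ℝ) + ‖m - c‖ ^ 2) ν :=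
    hinner.add (integrable_const _)
  have hIm := integrable_sq_dist ν hν m
  calc ∫ x, ‖x - c‖ ^ 2 ∂ν
      = ∫ x, (‖x - m‖ ^ 2 + ((2:ℝ) * (inner ℝ (m - c) (x - m) : ℝ) + ‖m - c‖ ^ 2)) ∂ν := by
        exact integral_congr_ae (by filter_upwards with x using hptwise x)
    _ = (∫ x, ‖x - m‖ ^ 2 ∂ν) + ((∫ x, (2:ℝ) * (inner ℝ (m - c) (x - m) : ℝ) ∂ν) + ∫ _, ‖m - c‖ ^ 2 ∂ν) := by
        rw [integral_add hIm hg, integral_add hinner (integrable_const (‖m - c‖ ^ 2))]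
    _ = (∫ x, ‖x - m‖ ^ 2 ∂ν) + ‖c - m‖ ^ 2 := by
        rw [integral_const_mul, integral_inner hintm, hzero]
        simp [norm_sub_rev m c]

end Aux

set_option maxHeartbeats 1000000 in
theorem minimizer_close_to_mean {d k : ℕ} (hk : 0 < k)
    (ν : Measure (EuclideanSpace ℝ (Fin d))) [IsProbabilityMeasure ν]
    (hν : Integrable (fun x => ‖x‖ ^ 2) ν) :
    ∃ T : ℝ, ∀ α : ℝ, T ≤ α →
      ∀ A : Fin k → EuclideanSpace ℝ (Fin d),
        (∀ ℓ, A ℓ ∈ convexHull ℝ (msupport ν)) →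
        (∀ B : Fin k → EuclideanSpace ℝ (Fin d),
          (∀ ℓ, B ℓ ∈ convexHull ℝ (msupport ν)) → regObj ν α A ≤ regObj ν α B) →
        d2inf A (fun _ => (∫ y, y ∂ν)) ≤
          8 * Real.sqrt k * α ^ (-(1/4 : ℝ)) *
            Real.sqrt (∫ x, ‖x - ∫ y, y ∂ν‖ ^ 2 ∂ν) := by

  haveI : Nonempty (Fin k) := ⟨⟨0, hk⟩⟩
  set m := ∫ y, y ∂ν with hm
  set V := ∫ x, ‖x - m‖ ^ 2 ∂ν with hV
  have hV0 : 0 ≤ V := integral_nonneg (fun x => by positivity)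
  set W := Real.sqrt V with hW
  have hW0 : 0 ≤ W := Real.sqrt_nonneg V
  have hWV : W ^ 2 = V := Real.sq_sqrt hV0
  have hk1 : (1:ℝ) ≤ (k:ℝ) := by exact_mod_cast hk
  refine ⟨(k:ℝ) + 1, ?_⟩
  intro α hα A hA hmin
  have hα0 : (0:ℝ) < α := by linarith
  have hkα : (k:ℝ) ≤ α := by linarith
  set abar := (k:ℝ)⁻¹ • ∑ j, A j with habar
  set S := ∑ ℓ, ‖A ℓ - abar‖ ^ 2 with hS
  have hS0 : 0 ≤ S := Finset.sum_nonneg (fun ℓ _ => by positivity)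
  set r := Real.sqrt S with hr
  have hr0 : 0 ≤ r := Real.sqrt_nonneg S
  have hrS : r ^ 2 = S := Real.sq_sqrt hS0
  set C := convexHull ℝ (Set.range A) with hC
  set δ := ‖abar - m‖ with hδdef
  have hδ0 : 0 ≤ δ := norm_nonneg _
  -- integrability of the infDist term
  have hCne : C.Nonempty := ⟨A ⟨0, hk⟩, subset_convexHull ℝ _ (Set.mem_range_self _)⟩
  have hId2 : Integrable (fun x => Metric.infDist x C ^ 2) ν := by
    refine (integrable_sq_dist ν hν (A ⟨0, hk⟩)).mono'
      (((Metric.continuous_infDist_pt C).pow 2).aestronglyMeasurable) ?_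
    filter_upwards with x
    have h1 : Metric.infDist x C ≤ dist x (A ⟨0, hk⟩) :=
      Metric.infDist_le_dist_of_mem (subset_convexHull ℝ _ (Set.mem_range_self _))
    have h2 : 0 ≤ Metric.infDist x C := Metric.infDist_nonneg
    rw [Real.norm_eq_abs, abs_of_nonneg (by positivity)]
    rw [dist_eq_norm] at h1
    nlinarith [norm_nonneg (x - A ⟨0, hk⟩)]
  have hd2nn : 0 ≤ ∫ x, Metric.infDist x C ^ 2 ∂ν :=
    integral_nonneg (fun x => by positivity)
  have hαkS : 0 ≤ α / k * S := mul_nonneg (div_nonneg hα0.le (Nat.cast_nonneg k)) hS0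
  -- Step 1 : the objective value of A (squared) is at most V
  have hstep1 : (∫ x, Metric.infDist x C ^ 2 ∂ν) + α / k * S ≤ V := by
    refine le_of_forall_pos_le_add ?_
    intro ε hε
    obtain ⟨q, hqhull, hqdist⟩ := Metric.mem_closure_iff.mp
      (mean_mem_closure ν hν) (Real.sqrt ε) (Real.sqrt_pos.mpr hε)
    have hqm : ‖q - m‖ ^ 2 ≤ ε := by
      have h1 : ‖q - m‖ < Real.sqrt ε := by
        rw [← dist_eq_norm, dist_comm]; exact hqdist
      nlinarith [Real.sq_sqrt hε.le, norm_nonneg (q - m), Real.sqrt_nonneg ε]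
    have hcomp := hmin (fun _ => q) (fun _ => hqhull)
    have hBsum : ∑ ℓ : Fin k, ‖q - (k : ℝ)⁻¹ • ∑ _j : Fin k, q‖ ^ 2 = 0 := by
      have : ∑ _j : Fin k, q = (k:ℝ) • q := by
        rw [Finset.sum_const, Finset.card_univ, Fintype.card_fin,
          Nat.cast_smul_eq_nsmul]
      rw [this, smul_smul, inv_mul_cancel₀ (by exact_mod_cast hk.ne' : (k:ℝ) ≠ 0), one_smul]
      simp
    have hBval : regObj ν α (fun _ : Fin k => q) = Real.sqrt (∫ x, ‖x - q‖ ^ 2 ∂ν) := by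
      unfold regObj
      rw [Set.range_const, convexHull_singleton]
      simp only [Metric.infDist_singleton, dist_eq_norm]
      rw [hBsum, mul_zero, add_zero]
    have hIB0 : 0 ≤ ∫ x, ‖x - q‖ ^ 2 ∂ν := integral_nonneg (fun x => by positivity)
    have hsq : (∫ x, Metric.infDist x C ^ 2 ∂ν) + α / k * S ≤ ∫ x, ‖x - q‖ ^ 2 ∂ν := by
      have h1 : Real.sqrt ((∫ x, Metric.infDist x C ^ 2 ∂ν) + α / k * S)
          ≤ Real.sqrt (∫ x, ‖x - q‖ ^ 2 ∂ν) := by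
        rw [← hBval]
        exact hcomp
      calc (∫ x, Metric.infDist x C ^ 2 ∂ν) + α / k * S
          = Real.sqrt ((∫ x, Metric.infDist x C ^ 2 ∂ν) + α / k * S) ^ 2 :=
            (Real.sq_sqrt (by linarith)).symm
        _ ≤ Real.sqrt (∫ x, ‖x - q‖ ^ 2 ∂ν) ^ 2 := by
            exact pow_le_pow_left₀ (Real.sqrt_nonneg _) h1 2
        _ = ∫ x, ‖x - q‖ ^ 2 ∂ν := Real.sq_sqrt hIB0
    calc (∫ x, Metric.infDist x C ^ 2 ∂ν) + α / k * S ≤ ∫ x, ‖x - q‖ ^ 2 ∂ν := hsq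
      _ = V + ‖q - m‖ ^ 2 := bias_var ν hν q
      _ ≤ V + ε := by linarith
  -- M = second moment about abar
  set M := ∫ x, ‖x - abar‖ ^ 2 ∂ν with hM
  have hMbv : M = V + δ ^ 2 := bias_var ν hν abar
  have hM0 : 0 ≤ M := by rw [hMbv]; nlinarith [hV0, sq_nonneg δ]
  clear_value V W S r δ M
  -- each point of C is within r of abar
  have hCball : C ⊆ Metric.closedBall abar r := by
    rw [hC]
    refine convexHull_min ?_ (convex_closedBall _ _)
    rintro y ⟨ℓ, rfl⟩
    have h1 : ‖A ℓ - abar‖ ^ 2 ≤ S := by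
      rw [hS]
      exact Finset.single_le_sum (f := fun j => ‖A j - abar‖ ^ 2)
        (fun j _ => by positivity) (Finset.mem_univ ℓ)
    have h2 : ‖A ℓ - abar‖ ≤ r := by
      rw [hr]
      calc ‖A ℓ - abar‖ = Real.sqrt (‖A ℓ - abar‖ ^ 2) := (Real.sqrt_sq (norm_nonneg _)).symm
        _ ≤ Real.sqrt S := Real.sqrt_le_sqrt h1
    simpa [Metric.mem_closedBall, dist_eq_norm] using h2
  -- key inequality for all t > 0
  have key : ∀ t : ℝ, 0 < t → δ ^ 2 + α / k * S ≤ t * M + S / t := by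
    intro t ht
    have hpt : ∀ x, ‖x - abar‖ ^ 2 - (t * ‖x - abar‖ ^ 2 + S / t)
        ≤ Metric.infDist x C ^ 2 := by
      intro x
      set a := ‖x - abar‖ with ha
      set D := Metric.infDist x C with hD
      have ha0 : 0 ≤ a := norm_nonneg _
      have hD0 : 0 ≤ D := Metric.infDist_nonneg
      have hD1 : a - r ≤ D := by
        by_contra hcon
        push_neg at hcon
        obtain ⟨y, hy, hlt⟩ := (Metric.infDist_lt_iff hCne).mp hcon
        have h1 : dist y abar ≤ r := Metric.mem_closedBall.mp (hCball hy)
        have h2 := dist_triangle x y abar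
        have h3 : dist x abar = a := (dist_eq_norm x abar).trans rfl
        linarith
      have hbase : a ^ 2 - 2 * r * a ≤ D ^ 2 := by
        by_cases hra : r ≤ a
        · nlinarith [mul_self_le_mul_self (by linarith : (0:ℝ) ≤ a - r) hD1]
        · nlinarith
      have hamgm : 2 * r * a ≤ t * a ^ 2 + S / t := by
        rw [← hrS]
        have hdiv : r ^ 2 / t * t = r ^ 2 := div_mul_cancel₀ _ (ne_of_gt ht)
        nlinarith [sq_nonneg (t * a - r), ht, hdiv]
      linarith
    have hintLHS : Integrable
        (fun x => ‖x - abar‖ ^ 2 - (t * ‖x - abar‖ ^ 2 + S / t)) ν :=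
      (integrable_sq_dist ν hν abar).sub
        (((integrable_sq_dist ν hν abar).const_mul t).add (integrable_const _))
    have hmono : ∫ x, (‖x - abar‖ ^ 2 - (t * ‖x - abar‖ ^ 2 + S / t)) ∂ν
        ≤ ∫ x, Metric.infDist x C ^ 2 ∂ν :=
      integral_mono hintLHS hId2 (fun x => hpt x)
    have hint1 : Integrable (fun x : EuclideanSpace ℝ (Fin d) => t * ‖x - abar‖ ^ 2) ν :=
      (integrable_sq_dist ν hν abar).const_mul t
    have hint2 : Integrable (fun _ : EuclideanSpace ℝ (Fin d) => S / t) ν := integrable_const _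
    have hint3 : Integrable (fun x : EuclideanSpace ℝ (Fin d) =>
        t * ‖x - abar‖ ^ 2 + S / t) ν := hint1.add hint2
    have hLHSval : ∫ x, (‖x - abar‖ ^ 2 - (t * ‖x - abar‖ ^ 2 + S / t)) ∂ν
        = M - (t * M + S / t) := by
      rw [integral_sub (integrable_sq_dist ν hν abar) hint3]
      have h2 : ∫ x, (t * ‖x - abar‖ ^ 2 + S / t) ∂ν = t * M + S / t := by
        rw [integral_add hint1 hint2, integral_const_mul, integral_const]
        simp [hM]
      rw [h2, hM]
    rw [hLHSval] at hmono
    linarith [hmono, hstep1, hMbv]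
  -- bound on r
  set β := Real.sqrt ((k:ℝ) / α) with hβ
  have hβ0 : 0 ≤ β := Real.sqrt_nonneg _
  have hβsq : β ^ 2 = (k:ℝ) / α := Real.sq_sqrt (div_nonneg (Nat.cast_nonneg k) hα0.le)
  clear_value β
  have hβ1 : β ≤ 1 := by
    rw [hβ]
    calc Real.sqrt ((k:ℝ)/α) ≤ Real.sqrt 1 :=
          Real.sqrt_le_sqrt (by rw [div_le_one hα0]; exact hkα)
      _ = 1 := Real.sqrt_one
  have hrle : r ≤ β * W := by
    have h1 : S ≤ (β * W) ^ 2 := by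
      have h2 : α / k * S ≤ V := by linarith [hd2nn, hstep1]
      have h3 : S ≤ k / α * V := by
        rw [div_mul_eq_mul_div, div_le_iff₀ (by exact_mod_cast hk : (0:ℝ) < (k:ℝ))] at h2
        rw [div_mul_eq_mul_div, le_div_iff₀ hα0]
        linarith
      calc S ≤ k / α * V := h3
        _ = (β * W) ^ 2 := by rw [mul_pow, hβsq, hWV]
    calc r = Real.sqrt S := hr
      _ ≤ Real.sqrt ((β * W) ^ 2) := Real.sqrt_le_sqrt h1
      _ = β * W := Real.sqrt_sq (mul_nonneg hβ0 hW0)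
  -- bound on δ²
  have hδsq : δ ^ 2 ≤ 2 * r * Real.sqrt M := by
    rcases eq_or_lt_of_le hr0 with hre | hrpos
    · -- r = 0, hence S = 0
      have hSzero : S = 0 := by rw [← hrS, ← hre]; ring
      have hd0 : δ ^ 2 ≤ 0 := by
        refine le_of_forall_pos_le_add ?_
        intro ε hε
        have ht : (0:ℝ) < ε / (M + 1) := div_pos hε (by linarith)
        have := key (ε / (M + 1)) ht
        rw [hSzero] at this
        have h1 : ε / (M + 1) * M ≤ ε := by
          rw [div_mul_eq_mul_div, div_le_iff₀ (by linarith)]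
          nlinarith
        simp only [mul_zero, div_zero, add_zero, zero_div] at this
        nlinarith [hαkS]
      nlinarith [mul_nonneg (mul_nonneg (by norm_num : (0:ℝ) ≤ 2) hr0) (Real.sqrt_nonneg M)]
    · rcases eq_or_lt_of_le hM0 with hMe | hMpos
      · -- M = 0, then δ² ≤ M = 0
        have : δ ^ 2 ≤ 0 := by rw [hMbv] at hMe; nlinarith
        nlinarith [mul_nonneg (mul_nonneg (by norm_num : (0:ℝ) ≤ 2) hr0) (Real.sqrt_nonneg M)]
      · have hsM : 0 < Real.sqrt M := Real.sqrt_pos.mpr hMpos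
        have ht : (0:ℝ) < r / Real.sqrt M := div_pos hrpos hsM
        have := key (r / Real.sqrt M) ht
        have hmm : Real.sqrt M * Real.sqrt M = M := Real.mul_self_sqrt hMpos.le
        have h1 : r / Real.sqrt M * M = r * Real.sqrt M := by
          rw [div_mul_eq_mul_div, div_eq_iff (ne_of_gt hsM), mul_assoc, hmm]
        have h2 : S / (r / Real.sqrt M) = r * Real.sqrt M := by
          rw [← hrS, div_div_eq_mul_div, div_eq_iff (ne_of_gt hrpos)]
          ring
        linarith [this, h1, h2, hαkS]
  -- bound on δ
  set u := Real.sqrt β with hu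
  have hu0 : 0 ≤ u := Real.sqrt_nonneg _
  have husq : u ^ 2 = β := Real.sq_sqrt hβ0
  clear_value u
  have hu1 : u ≤ 1 := by
    rw [hu]
    calc Real.sqrt β ≤ Real.sqrt 1 := Real.sqrt_le_sqrt hβ1
      _ = 1 := Real.sqrt_one
  have hsqrtM : Real.sqrt M ≤ W + δ := by
    have h1 : M ≤ (W + δ) ^ 2 := by
      rw [hMbv]
      nlinarith only [mul_nonneg hW0 hδ0, hWV, hδ0, hW0]
    calc Real.sqrt M ≤ Real.sqrt ((W + δ) ^ 2) := Real.sqrt_le_sqrt h1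
      _ = W + δ := Real.sqrt_sq (by positivity)
  have hδle : δ ≤ 3 * u * W := by
    have h1 : δ ^ 2 ≤ 2 * (β * W) * (W + δ) := by
      calc δ ^ 2 ≤ 2 * r * Real.sqrt M := hδsq
        _ ≤ 2 * (β * W) * (W + δ) := by
            apply mul_le_mul (by linarith) hsqrtM (Real.sqrt_nonneg M) (by positivity)
    rw [← husq] at h1
    nlinarith only [h1, hu0, hu1, hW0, hδ0, sq_nonneg (δ - 3 * u * W), mul_nonneg hu0 hW0,
      sq_nonneg u, mul_nonneg (mul_nonneg hu0 hu0) hW0, mul_nonneg (mul_nonneg hu0 hW0) hδ0]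
  -- conclusion
  have hfinal : d2inf A (fun _ => m) ≤ r + δ := by
    have h1 : d2inf A (fun _ => m) ≤ ⨆ ℓ : Fin k, dist (A ((Equiv.refl (Fin k)) ℓ)) m :=
      ciInf_le (Set.Finite.bddBelow (Set.finite_range _)) (Equiv.refl (Fin k))
    refine h1.trans (ciSup_le (fun ℓ => ?_))
    simp only [Equiv.refl_apply]
    have h2 : ‖A ℓ - abar‖ ≤ r := by
      have h3 : ‖A ℓ - abar‖ ^ 2 ≤ S := by
        rw [hS]
        exact Finset.single_le_sum (f := fun j => ‖A j - abar‖ ^ 2)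
          (fun j _ => by positivity) (Finset.mem_univ ℓ)
      rw [hr]
      calc ‖A ℓ - abar‖ = Real.sqrt (‖A ℓ - abar‖ ^ 2) := (Real.sqrt_sq (norm_nonneg _)).symm
        _ ≤ Real.sqrt S := Real.sqrt_le_sqrt h3
    calc dist (A ℓ) m = ‖A ℓ - abar + (abar - m)‖ := by rw [dist_eq_norm]; congr 1; abel
      _ ≤ ‖A ℓ - abar‖ + ‖abar - m‖ := norm_add_le _ _
      _ ≤ r + δ := by rw [hδdef]; linarith
  have huk : u ≤ Real.sqrt k * α ^ (-(1/4 : ℝ)) := by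
    have hrpow0 : (0:ℝ) < α ^ (-(1/4 : ℝ)) := Real.rpow_pos_of_pos hα0 _
    have hRHS0 : 0 ≤ Real.sqrt k * α ^ (-(1/4 : ℝ)) := by positivity
    have hsqα : (0:ℝ) < Real.sqrt α := Real.sqrt_pos.mpr hα0
    have hsq2 : (Real.sqrt k * α ^ (-(1/4 : ℝ))) ^ 2 = (k:ℝ) / Real.sqrt α := by
      rw [mul_pow, Real.sq_sqrt (by positivity : (0:ℝ) ≤ (k:ℝ))]
      have h4 : (α ^ (-(1/4 : ℝ))) ^ 2 = α ^ (-(1/2 : ℝ)) := by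
        rw [← Real.rpow_natCast (α ^ (-(1/4 : ℝ))) 2, ← Real.rpow_mul hα0.le]
        norm_num
      have h5 : α ^ (-(1/2 : ℝ)) = (Real.sqrt α)⁻¹ := by
        rw [Real.rpow_neg hα0.le, Real.sqrt_eq_rpow]
      rw [h4, h5, div_eq_mul_inv]
    have hβval : β = Real.sqrt k / Real.sqrt α := by
      rw [hβ, Real.sqrt_div (Nat.cast_nonneg k) α]
    have husqle : u ^ 2 ≤ (Real.sqrt k * α ^ (-(1/4 : ℝ))) ^ 2 := by
      rw [husq, hsq2, hβval, div_le_div_iff₀ hsqα hsqα]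
      have hk2 : Real.sqrt k ≤ (k:ℝ) := by
        have hkk : ((k:ℝ)) ≤ ((k:ℝ))^2 := by nlinarith only [hk1]
        calc Real.sqrt k ≤ Real.sqrt ((k:ℝ)^2) := Real.sqrt_le_sqrt hkk
          _ = (k:ℝ) := Real.sqrt_sq (by positivity)
      exact mul_le_mul_of_nonneg_right hk2 hsqα.le
    calc u = Real.sqrt (u ^ 2) := (Real.sqrt_sq hu0).symm
      _ ≤ Real.sqrt ((Real.sqrt k * α ^ (-(1/4 : ℝ))) ^ 2) := Real.sqrt_le_sqrt husqle
      _ = Real.sqrt k * α ^ (-(1/4 : ℝ)) := Real.sqrt_sq hRHS0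
  have hβu : β ≤ u := by nlinarith only [husq, hu0, hu1]
  calc d2inf A (fun _ => m) ≤ r + δ := hfinal
    _ ≤ β * W + 3 * u * W := by linarith [hrle, hδle]
    _ ≤ 4 * u * W := by linarith only [mul_le_mul_of_nonneg_right hβu hW0]
    _ ≤ 8 * Real.sqrt k * α ^ (-(1/4 : ℝ)) * W := by
        have h6 : u * W ≤ (Real.sqrt k * α ^ (-(1/4 : ℝ))) * W :=
          mul_le_mul_of_nonneg_right huk hW0
        linarith only [h6, mul_nonneg (mul_nonneg (Real.sqrt_nonneg (k:ℝ))
          (Real.rpow_pos_of_pos hα0 (-(1/4 : ℝ))).le) hW0]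
end

section
/- Define I(α) = (1/(2π))( α/4 − (13/12) sin α + α cos²(α/2) − (1/3) sin(α/2) cos³(α/2) ) for α ∈ [0, π]. Then I(0) = 0, I(π) = 1/8, and I is nonnegative and monotonically increasing on [0, π]. -/
open Real

noncomputable def Ifun (α : ℝ) : ℝ :=
  (1 / (2 * π)) * (α / 4 - 13 / 12 * Real.sin α + α * Real.cos (α / 2) ^ 2 -
    1 / 3 * Real.sin (α / 2) * Real.cos (α / 2) ^ 3)

lemma hasDerivAt_Ifun (α : ℝ) : HasDerivAt Ifun
    ((1 / (2 * π)) * (1 / 4 - 13 / 12 * Real.cos α + Real.cos (α / 2) ^ 2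
      - α * Real.sin (α / 2) * Real.cos (α / 2) - Real.cos (α / 2) ^ 4 / 6
      + Real.sin (α / 2) ^ 2 * Real.cos (α / 2) ^ 2 / 2)) α := by
  have h2 : HasDerivAt (fun x : ℝ => x / 2) (1 / 2) α := (hasDerivAt_id α).div_const 2
  have hs : HasDerivAt (fun x : ℝ => Real.sin (x / 2)) (Real.cos (α / 2) * (1 / 2)) α := h2.sin
  have hc : HasDerivAt (fun x : ℝ => Real.cos (x / 2)) (-Real.sin (α / 2) * (1 / 2)) α := h2.cos
  have h1 : HasDerivAt (fun x : ℝ => x / 4) (1 / 4) α := (hasDerivAt_id α).div_const 4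
  have hsin : HasDerivAt (fun x : ℝ => 13 / 12 * Real.sin x) (13 / 12 * Real.cos α) α :=
    (Real.hasDerivAt_sin α).const_mul (13 / 12)
  have h3 : HasDerivAt (fun x : ℝ => x * Real.cos (x / 2) ^ 2)
      (1 * Real.cos (α / 2) ^ 2 +
        α * ((2 : ℕ) * Real.cos (α / 2) ^ 1 * (-Real.sin (α / 2) * (1 / 2)))) α :=
    (hasDerivAt_id α).mul (hc.pow 2)
  have h4 : HasDerivAt (fun x : ℝ => 1 / 3 * (Real.sin (x / 2) * Real.cos (x / 2) ^ 3))
      (1 / 3 * (Real.cos (α / 2) * (1 / 2) * Real.cos (α / 2) ^ 3 +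
        Real.sin (α / 2) * ((3 : ℕ) * Real.cos (α / 2) ^ 2 * (-Real.sin (α / 2) * (1 / 2))))) α :=
    (hs.mul (hc.pow 3)).const_mul (1 / 3)
  have h5 := (((h1.sub hsin).add h3).sub h4).const_mul (1 / (2 * π))
  convert h5 using 2 with x
  · rfl
  · rfl
  · unfold Ifun; simp only [Pi.sub_apply, Pi.add_apply]; ring
  · push_cast; ring

lemma hF : ∀ t ∈ Set.Icc (0 : ℝ) (π / 2),
    0 ≤ Real.sin t - Real.sin t ^ 3 / 3 - t * Real.cos t := by
  set F : ℝ → ℝ := fun t => Real.sin t - Real.sin t ^ 3 / 3 - t * Real.cos t with hFdef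
  have hd : ∀ t : ℝ, HasDerivAt F (Real.sin t * (t - Real.sin t * Real.cos t)) t := by
    intro t
    have h1 : HasDerivAt F (Real.cos t - (3 : ℕ) * Real.sin t ^ 2 * Real.cos t / 3 -
        (1 * Real.cos t + t * (-Real.sin t))) t := by
      exact ((Real.hasDerivAt_sin t).sub
        (((Real.hasDerivAt_sin t).pow 3).div_const 3)).sub
        ((hasDerivAt_id t).mul (Real.hasDerivAt_cos t))
    convert h1 using 1
    push_cast; ring
  have hmono : MonotoneOn F (Set.Icc 0 (π / 2)) := by
    apply monotoneOn_of_deriv_nonneg (convex_Icc 0 (π / 2))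
    · exact fun t _ => ((hd t).differentiableAt).continuousAt.continuousWithinAt
    · intro t _; exact ((hd t).differentiableAt).differentiableWithinAt
    · intro t ht
      rw [interior_Icc] at ht
      rw [(hd t).deriv]
      have h0 : 0 ≤ Real.sin t := Real.sin_nonneg_of_nonneg_of_le_pi ht.1.le
        (le_trans ht.2.le (by linarith [Real.pi_pos]))
      have h1 : Real.sin t ≤ t := Real.sin_le ht.1.le
      have h2 : Real.cos t ≤ 1 := Real.cos_le_one t
      have h3 : Real.sin t * Real.cos t ≤ Real.sin t := mul_le_of_le_one_right h0 h2
      exact mul_nonneg h0 (by linarith)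
  intro t ht
  have h0 : F 0 = 0 := by simp [hFdef]
  have := hmono (Set.left_mem_Icc.2 (by positivity)) ht ht.1
  rw [h0] at this
  exact this

lemma deriv_nonneg (α : ℝ) (hα : α ∈ Set.Icc (0 : ℝ) π) :
    0 ≤ (1 / (2 * π)) * (1 / 4 - 13 / 12 * Real.cos α + Real.cos (α / 2) ^ 2
      - α * Real.sin (α / 2) * Real.cos (α / 2) - Real.cos (α / 2) ^ 4 / 6
      + Real.sin (α / 2) ^ 2 * Real.cos (α / 2) ^ 2 / 2) := by
  have hπ := Real.pi_pos
  apply mul_nonneg (by positivity)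
  have ht : α / 2 ∈ Set.Icc (0 : ℝ) (π / 2) := ⟨by linarith [hα.1], by linarith [hα.2]⟩
  have hF2 := hF (α / 2) ht
  have hs0 : 0 ≤ Real.sin (α / 2) :=
    Real.sin_nonneg_of_nonneg_of_le_pi (by linarith [hα.1]) (by linarith [hα.2, hπ])
  have hpyth := Real.sin_sq_add_cos_sq (α / 2)
  have hcos : Real.cos α = 2 * Real.cos (α / 2) ^ 2 - 1 := by
    have h := Real.cos_two_mul (α / 2)
    rw [show (2 : ℝ) * (α / 2) = α by ring] at h
    linarith
  rw [hcos]
  nlinarith [mul_nonneg hs0 hF2, sq_nonneg (Real.sin (α / 2)), sq_nonneg (Real.cos (α / 2))]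

theorem Ifun_properties :
    Ifun 0 = 0 ∧ Ifun π = 1 / 8 ∧ (∀ α ∈ Set.Icc (0 : ℝ) π, 0 ≤ Ifun α) ∧
      MonotoneOn Ifun (Set.Icc (0 : ℝ) π) := by
  have hπ := Real.pi_pos
  have h0 : Ifun 0 = 0 := by simp [Ifun]
  have hmono : MonotoneOn Ifun (Set.Icc (0 : ℝ) π) := by
    apply monotoneOn_of_deriv_nonneg (convex_Icc 0 π)
    · exact fun x _ => ((hasDerivAt_Ifun x).differentiableAt).continuousAt.continuousWithinAt
    · intro x _; exact ((hasDerivAt_Ifun x).differentiableAt).differentiableWithinAt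
    · intro x hx
      rw [interior_Icc] at hx
      rw [(hasDerivAt_Ifun x).deriv]
      exact deriv_nonneg x ⟨hx.1.le, hx.2.le⟩
  refine ⟨h0, ?_, ?_, hmono⟩
  · have : Real.cos (π / 2) = 0 := Real.cos_pi_div_two
    simp only [Ifun, Real.sin_pi, this]
    field_simp
    ring
  · intro α hα
    have := hmono (Set.left_mem_Icc.2 hπ.le) hα hα.1
    rw [h0] at this
    exact this
end

section
/- The function I(α) = (1/(2π))( α/4 − (13/12) sin α + α cos²(α/2) − (1/3) sin(α/2) cos³(α/2) ) is strictly convex on [0, π]. -/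
open Real

lemma nonneg_of_deriv {f f' : ℝ → ℝ} (hd : ∀ x, HasDerivAt f (f' x) x)
    (h0 : f 0 = 0) (h' : ∀ x, 0 ≤ x → 0 ≤ f' x) {x : ℝ} (hx : 0 ≤ x) : 0 ≤ f x := by
  have hm : MonotoneOn f (Set.Ici 0) := by
    apply monotoneOn_of_deriv_nonneg (convex_Ici 0)
      (fun y _ => (hd y).continuousAt.continuousWithinAt)
      (fun y hy => ((hd y).differentiableAt).differentiableWithinAt)
    intro y hy
    rw [(hd y).deriv]
    exact h' y (le_of_lt (by simpa [interior_Ici] using hy))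
  have := hm (Set.self_mem_Ici) (Set.mem_Ici.2 hx) hx
  linarith [h0 ▸ this]

lemma sin_lb1 {x : ℝ} (hx : 0 ≤ x) : x - x^3/6 ≤ Real.sin x := by
  have h := nonneg_of_deriv (f := fun y => Real.sin y - y + y^3/6)
    (f' := fun y => Real.cos y - 1 + y^2/2) ?_ (by norm_num) ?_ hx
  · linarith
  · intro y
    have h := ((Real.hasDerivAt_sin y).sub (hasDerivAt_id' y)).add
      ((hasDerivAt_pow 3 y).div_const 6)
    refine h.congr_deriv ?_; push_cast; ring
  · intro y _; have := Real.one_sub_sq_div_two_le_cos (x := y); linarith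

lemma cos_ub4 {x : ℝ} (hx : 0 ≤ x) : Real.cos x ≤ 1 - x^2/2 + x^4/24 := by
  have h := nonneg_of_deriv (f := fun y => 1 - y^2/2 + y^4/24 - Real.cos y)
    (f' := fun y => -y + y^3/6 + Real.sin y) ?_ (by norm_num) ?_ hx
  · linarith
  · intro y
    have h := ((((hasDerivAt_const y (1:ℝ)).sub ((hasDerivAt_pow 2 y).div_const 2)).add
      ((hasDerivAt_pow 4 y).div_const 24)).sub (Real.hasDerivAt_cos y))
    refine h.congr_deriv ?_; push_cast; ring
  · intro y hy; have := sin_lb1 hy; linarith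

lemma sin_ub5 {x : ℝ} (hx : 0 ≤ x) : Real.sin x ≤ x - x^3/6 + x^5/120 := by
  have h := nonneg_of_deriv (f := fun y => y - y^3/6 + y^5/120 - Real.sin y)
    (f' := fun y => 1 - y^2/2 + y^4/24 - Real.cos y) ?_ (by norm_num) ?_ hx
  · linarith
  · intro y
    have h := ((((hasDerivAt_id' y).sub ((hasDerivAt_pow 3 y).div_const 6)).add
      ((hasDerivAt_pow 5 y).div_const 120)).sub (Real.hasDerivAt_sin y))
    refine h.congr_deriv ?_; push_cast; ring
  · intro y hy; have := cos_ub4 hy; linarith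

lemma cos_lb6 {x : ℝ} (hx : 0 ≤ x) : 1 - x^2/2 + x^4/24 - x^6/720 ≤ Real.cos x := by
  have h := nonneg_of_deriv (f := fun y => Real.cos y - (1 - y^2/2 + y^4/24 - y^6/720))
    (f' := fun y => y - y^3/6 + y^5/120 - Real.sin y) ?_ (by norm_num) ?_ hx
  · linarith
  · intro y
    have h := (Real.hasDerivAt_cos y).sub ((((hasDerivAt_const y (1:ℝ)).sub
      ((hasDerivAt_pow 2 y).div_const 2)).add ((hasDerivAt_pow 4 y).div_const 24)).sub
      ((hasDerivAt_pow 6 y).div_const 720))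
    refine h.congr_deriv ?_; push_cast; ring
  · intro y hy; have := sin_ub5 hy; linarith

lemma sin_lb7 {x : ℝ} (hx : 0 ≤ x) : x - x^3/6 + x^5/120 - x^7/5040 ≤ Real.sin x := by
  have h := nonneg_of_deriv (f := fun y => Real.sin y - (y - y^3/6 + y^5/120 - y^7/5040))
    (f' := fun y => Real.cos y - (1 - y^2/2 + y^4/24 - y^6/720)) ?_ (by norm_num) ?_ hx
  · linarith
  · intro y
    have h := (Real.hasDerivAt_sin y).sub ((((hasDerivAt_id' y).sub
      ((hasDerivAt_pow 3 y).div_const 6)).add ((hasDerivAt_pow 5 y).div_const 120)).sub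
      ((hasDerivAt_pow 7 y).div_const 5040))
    refine h.congr_deriv ?_; push_cast; ring
  · intro y hy; have := cos_lb6 hy; linarith

lemma key_pos {x : ℝ} (hx0 : 0 < x) (hxpi : x < π) :
    0 < Real.sin x + Real.sin (2*x) - 3 * x * Real.cos x := by
  rcases le_or_gt x (π/2) with hc | hc
  · -- Taylor bound regime
    have hxle : x ≤ 1.58 := by
      have := Real.pi_lt_d2
      linarith
    have h1 := sin_lb7 hx0.le
    have h2 := sin_lb7 (by linarith : (0:ℝ) ≤ 2*x)
    have h3 := cos_ub4 hx0.le
    have hx5 : 0 < x^5 := pow_pos hx0 5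
    have h4 : 3 * x * Real.cos x ≤ 3 * x * (1 - x^2/2 + x^4/24) :=
      mul_le_mul_of_nonneg_left h3 (by linarith)
    have hx2 : x^2 ≤ 2.4964 := by nlinarith
    have hx7 : x^7 ≤ 2.4964 * x^5 := by nlinarith
    nlinarith
  · have hs : 0 < Real.sin x := Real.sin_pos_of_pos_of_lt_pi hx0 hxpi
    have hs1 : Real.sin x ≤ 1 := Real.sin_le_one x
    have hcneg : Real.cos x < 0 := Real.cos_neg_of_pi_div_two_lt_of_lt hc (by linarith)
    have hc1 : (-1:ℝ) ≤ Real.cos x := Real.neg_one_le_cos x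
    have hx15 : (1.57:ℝ) < x := by have := Real.pi_gt_d6; linarith
    rw [Real.sin_two_mul]
    nlinarith [mul_nonneg (by linarith : (0:ℝ) ≤ -Real.cos x) (by linarith : (0:ℝ) ≤ 1 - Real.sin x),
      mul_pos (by linarith : (0:ℝ) < -Real.cos x) (by linarith : (0:ℝ) < 3*x - 2)]

lemma Ifun_eq : Ifun = fun x => (1 / (2 * π)) * (3/4 * x - 7/6 * Real.sin x
    + 1/2 * (x * Real.cos x) - 1/24 * Real.sin (2*x)) := by
  funext x
  have hs : Real.sin x = 2 * Real.sin (x/2) * Real.cos (x/2) := by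
    have := Real.sin_two_mul (x/2)
    rw [show 2*(x/2) = x by ring] at this
    linarith
  have hc : Real.cos x = 2 * Real.cos (x/2)^2 - 1 := by
    have := Real.cos_sq (x/2)
    rw [show 2*(x/2) = x by ring] at this
    linarith
  have hs2 : Real.sin (2*x) = 2 * Real.sin x * Real.cos x := Real.sin_two_mul x
  unfold Ifun
  rw [hs2, hc, hs]
  ring

lemma hasDerivAt_sin2 (x : ℝ) : HasDerivAt (fun y => Real.sin (2*y)) (2 * Real.cos (2*x)) x := by
  have h := (Real.hasDerivAt_sin (2*x)).comp x ((hasDerivAt_id' x).const_mul 2)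
  rw [show (fun y => Real.sin (2*y)) = Real.sin ∘ (fun y => 2*y) from rfl]
  refine h.congr_deriv ?_; ring

lemma hasDerivAt_cos2 (x : ℝ) : HasDerivAt (fun y => Real.cos (2*y)) (-(2 * Real.sin (2*x))) x := by
  have h := (Real.hasDerivAt_cos (2*x)).comp x ((hasDerivAt_id' x).const_mul 2)
  rw [show (fun y => Real.cos (2*y)) = Real.cos ∘ (fun y => 2*y) from rfl]
  refine h.congr_deriv ?_; ring

lemma hD1 (x : ℝ) : HasDerivAt Ifun
    ((1 / (2 * π)) * (3/4 - 2/3 * Real.cos x - 1/2 * (x * Real.sin x)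
      - 1/12 * Real.cos (2*x))) x := by
  rw [Ifun_eq]
  have h := (((((hasDerivAt_id' x).const_mul (3/4:ℝ)).sub
      ((Real.hasDerivAt_sin x).const_mul (7/6:ℝ))).add
      (((hasDerivAt_id' x).mul (Real.hasDerivAt_cos x)).const_mul (1/2:ℝ))).sub
      ((hasDerivAt_sin2 x).const_mul (1/24:ℝ))).const_mul (1 / (2 * π))
  refine h.congr_deriv ?_; ring

lemma hD2 (x : ℝ) : HasDerivAt (fun y => (1 / (2 * π)) * (3/4 - 2/3 * Real.cos y
      - 1/2 * (y * Real.sin y) - 1/12 * Real.cos (2*y)))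
    ((1 / (2 * π)) * (1/6 * (Real.sin x + Real.sin (2*x) - 3 * x * Real.cos x))) x := by
  have h := ((((hasDerivAt_const x (3/4:ℝ)).sub
      ((Real.hasDerivAt_cos x).const_mul (2/3:ℝ))).sub
      (((hasDerivAt_id' x).mul (Real.hasDerivAt_sin x)).const_mul (1/2:ℝ))).sub
      ((hasDerivAt_cos2 x).const_mul (1/12:ℝ))).const_mul (1 / (2 * π))
  refine h.congr_deriv ?_
  rw [Real.sin_two_mul]
  ring

theorem Ifun_strictConvexOn : StrictConvexOn ℝ (Set.Icc (0 : ℝ) π) Ifun := by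
  apply strictConvexOn_of_deriv2_pos (convex_Icc 0 π)
  · exact Continuous.continuousOn (by unfold Ifun; fun_prop)
  · intro x hx
    rw [interior_Icc] at hx
    have hderiv : deriv Ifun = fun y => (1 / (2 * π)) * (3/4 - 2/3 * Real.cos y
        - 1/2 * (y * Real.sin y) - 1/12 * Real.cos (2*y)) := by
      funext y; exact (hD1 y).deriv
    have h2 : deriv^[2] Ifun x
        = (1 / (2 * π)) * (1/6 * (Real.sin x + Real.sin (2*x) - 3 * x * Real.cos x)) := by
      rw [show deriv^[2] Ifun = deriv (deriv Ifun) from rfl, hderiv]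
      exact (hD2 x).deriv
    rw [h2]
    have hkey := key_pos hx.1 hx.2
    have hπ := Real.pi_pos
    apply mul_pos (by positivity) (by linarith)
end

section
/- Let μ be a probability measure on ℝ^d with compact support, let x₁, x₂, … be i.i.d. samples from μ, and let K_N = co({x₁,…,x_N}). Then μ-almost surely, d_H(K_N, co(supp(μ))) → 0 as N → ∞; i.e., the convex hull of the samples converges to the convex hull of the support in Hausdorff distance. -/
open MeasureTheory ProbabilityTheory Metric Set Filter

theorem convexHull_samples_tendsto {d : ℕ} {Ω : Type*} [MeasurableSpace Ω]
    (P : Measure Ω) [IsProbabilityMeasure P]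
    (μ : Measure (EuclideanSpace ℝ (Fin d))) [IsProbabilityMeasure μ]
    (hsupp : IsCompact (msupport μ))
    (X : ℕ → Ω → EuclideanSpace ℝ (Fin d))
    (hmeas : ∀ i, Measurable (X i))
    (hindep : iIndepFun X P)
    (hdist : ∀ i, Measure.map (X i) P = μ) :
    ∀ᵐ ω ∂P, Filter.Tendsto
      (fun N : ℕ => Metric.hausdorffDist
        (convexHull ℝ (Set.range (fun i : Fin N => X i ω)))
        (convexHull ℝ (msupport μ)))
      Filter.atTop (nhds 0) := by
  set S := msupport μ with hSdef
  have hSclosed : IsClosed S := hsupp.isClosed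
  -- complement of the support is null
  have hScompl : μ Sᶜ = 0 := by
    apply measure_null_of_locally_null
    intro x hx
    simp only [hSdef, msupport, Set.mem_compl_iff, Set.mem_setOf_eq, not_forall] at hx
    obtain ⟨U, hU, hUpos⟩ := hx
    exact ⟨U, nhdsWithin_le_nhds hU, by simpa using hUpos⟩
  -- a.s. every sample lies in S
  have hE1 : ∀ᵐ ω ∂P, ∀ i, X i ω ∈ S := by
    rw [MeasureTheory.ae_all_iff]
    intro i
    have h0 : P (X i ⁻¹' Sᶜ) = 0 := by
      rw [← Measure.map_apply (hmeas i) hSclosed.measurableSet.compl, hdist i]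
      exact hScompl
    exact MeasureTheory.ae_iff.2 h0
  -- a.s. some sample hits any ball centered in S
  have hA : ∀ y ∈ S, ∀ r : ℝ, 0 < r → ∀ᵐ ω ∂P, ∃ i, X i ω ∈ Metric.ball y r := by
    intro y hy r hr
    set B := Metric.ball y r with hB
    have hBm : MeasurableSet B := measurableSet_ball
    have hPs : ∀ n, P (X n ⁻¹' B) = μ B := fun n => by
      rw [← hdist n, Measure.map_apply (hmeas n) hBm]
    have hμB : μ B ≠ 0 := (hy B (Metric.ball_mem_nhds y hr)).ne'
    have hind : iIndepSet (fun n => X n ⁻¹' B) P :=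
      (iIndepSet_iff_meas_biInter (fun n => (hmeas n) hBm)).2
        (fun s => hindep.meas_biInter (fun i _ => ⟨B, hBm, rfl⟩))
    have hlim : P (limsup (fun n => X n ⁻¹' B) atTop) = 1 :=
      measure_limsup_eq_one (fun n => (hmeas n) hBm) hind
        (by simp only [hPs]; exact ENNReal.tsum_const_eq_top_of_ne_zero hμB)
    have hsub2 : limsup (fun n => X n ⁻¹' B) atTop ⊆ ⋃ i, X i ⁻¹' B := by
      intro ω hω
      obtain ⟨i, hi⟩ := (Filter.mem_limsup_iff_frequently_mem.1 hω).exists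
      exact Set.mem_iUnion.2 ⟨i, hi⟩
    have hU1 : P (⋃ i, X i ⁻¹' B) = 1 :=
      le_antisymm prob_le_one (hlim ▸ measure_mono hsub2)
    refine MeasureTheory.ae_iff.2 ?_
    have : {ω | ¬∃ i, X i ω ∈ Metric.ball y r} = (⋃ i, X i ⁻¹' B)ᶜ := by
      ext ω; simp [hB]
    rw [this]
    exact (prob_compl_eq_zero_iff (MeasurableSet.iUnion fun n => (hmeas n) hBm)).2 hU1
  -- finite covers of S at scale 1/(k+1)
  have hcov : ∀ k : ℕ, ∃ T : Set (EuclideanSpace ℝ (Fin d)), T ⊆ S ∧ T.Finite ∧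
      S ⊆ ⋃ y ∈ T, Metric.ball y (1 / (k + 1 : ℝ)) := by
    intro k
    have hr : (0 : ℝ) < 1 / (k + 1 : ℝ) := by positivity
    obtain ⟨T, hTS, hTfin, hTcov⟩ := hsupp.elim_finite_subcover_image
      (fun y _ => isOpen_ball) (fun x hx => Set.mem_biUnion hx (Metric.mem_ball_self hr))
    exact ⟨T, hTS, hTfin, hTcov⟩
  choose T hTS hTfin hTcov using hcov
  have hE2 : ∀ᵐ ω ∂P, ∀ k : ℕ, ∀ y ∈ T k, ∃ i, X i ω ∈ Metric.ball y (1 / (k + 1 : ℝ)) := by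
    rw [MeasureTheory.ae_all_iff]
    intro k
    rw [MeasureTheory.ae_ball_iff (hTfin k).countable]
    intro y hy
    exact hA y (hTS k hy) _ (by positivity)
  filter_upwards [hE1, hE2] with ω h1 h2
  rw [Metric.tendsto_atTop]
  intro ε hε
  obtain ⟨k, hk⟩ := exists_nat_one_div_lt (by linarith : (0:ℝ) < ε / 2)
  set r : ℝ := 1 / (k + 1 : ℝ) with hrdef
  have hrpos : (0:ℝ) < r := by positivity
  -- find a horizon M by which each center of the cover has been approximated
  choose! f hf using h2 k
  obtain ⟨M0, hM0⟩ := ((hTfin k).image f).bddAbove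
  refine ⟨M0 + 1, fun n hn => ?_⟩
  have hrange : Set.range (fun i : Fin n => X i ω) ⊆ S := by
    rintro _ ⟨i, rfl⟩; exact h1 i
  set K : Set (EuclideanSpace ℝ (Fin d)) :=
    convexHull ℝ (Set.range (fun i : Fin n => X i ω)) with hKdef
  have hKsub : K ⊆ convexHull ℝ S := convexHull_mono hrange
  -- S is within 2r of K
  have hScth : S ⊆ Metric.cthickening (2 * r) K := by
    intro z hz
    obtain ⟨y, hyT, hzy⟩ := Set.mem_iUnion₂.1 (hTcov k hz)
    have hiX : X (f y) ω ∈ Metric.ball y r := hf y hyT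
    have hflt : f y < n := by
      have : f y ≤ M0 := hM0 (Set.mem_image_of_mem f hyT)
      omega
    have hmemK : X (f y) ω ∈ K :=
      subset_convexHull ℝ _ ⟨⟨f y, hflt⟩, rfl⟩
    refine Metric.mem_cthickening_of_dist_le z (X (f y) ω) (2 * r) K hmemK ?_
    have h1' : dist z y < r := Metric.mem_ball.1 hzy
    have h2' : dist y (X (f y) ω) < r := by
      rw [dist_comm]; exact Metric.mem_ball.1 hiX
    calc dist z (X (f y) ω) ≤ dist z y + dist y (X (f y) ω) := dist_triangle _ _ _
      _ ≤ 2 * r := by linarith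
  have hCoScth : convexHull ℝ S ⊆ Metric.cthickening (2 * r) K :=
    convexHull_min hScth ((convex_convexHull ℝ _).cthickening _)
  have hHD : Metric.hausdorffDist K (convexHull ℝ S) ≤ 2 * r := by
    apply Metric.hausdorffDist_le_of_infDist (by positivity)
    · intro x hx
      rw [Metric.infDist_zero_of_mem (hKsub hx)]
      positivity
    · intro z hz
      have := Metric.mem_cthickening_iff.1 (hCoScth hz)
      exact ENNReal.toReal_le_of_le_ofReal (by positivity) this
  have hnonneg : 0 ≤ Metric.hausdorffDist K (convexHull ℝ S) := Metric.hausdorffDist_nonneg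
  rw [Real.dist_eq, sub_zero, abs_of_nonneg hnonneg]
  calc Metric.hausdorffDist K (convexHull ℝ S) ≤ 2 * r := hHD
    _ < ε := by rw [hrdef]; linarith
end
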